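/- Let p ≥ 3, x_⋆ ∈ ℝ^p with ‖x_⋆‖₂ = 1, K satisfy the kernel assumption, and δ > 0. Let G(x) = E[ l_δ((aᵀx)² − (aᵀx_⋆)²) ], where a is a standard Gaussian random vector in ℝ^p. Then: (a) x_⋆ and −x_⋆ are global minimizers of G (in particular local minima); (b) the point 0 ∈ ℝ^p is a local maximum of G. -/

import Mathlib

open MeasureTheory ProbabilityTheory
open scoped BigOperators RealInnerProductSpace Gradient

/-- The kernel assumption: `K` is a nonnegative, symmetric kernel integrating to one,
bounded, Lipschitz, positive at zero, and `x ↦ x * K x` is bounded, Lipschitz and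
absolutely integrable. -/
structure IsGoodKernel (K : ℝ → ℝ) : Prop where
  nonneg : ∀ x, 0 ≤ K x
  symm : ∀ x, K x = K (-x)
  integral_one : (∫ x, K x) = 1
  bounded : ∃ B, ∀ x, |K x| ≤ B
  lipschitz : ∃ L : NNReal, LipschitzWith L K
  pos_at_zero : 0 < K 0
  bar_bounded : ∃ B, ∀ x, |x * K x| ≤ B
  bar_lipschitz : ∃ L : NNReal, LipschitzWith L (fun x => x * K x)
  bar_integrable : Integrable (fun x => x * K x)

/-- The scaled kernel `K_δ(x) = (1/δ) K(x/δ)`. -/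
noncomputable def scaledKernel (K : ℝ → ℝ) (δ : ℝ) (x : ℝ) : ℝ := (1 / δ) * K (x / δ)

/-- The convolution-type smoothed loss `l_δ(x) = ∫ |y| K_δ(x - y) dy`. -/
noncomputable def smoothedLoss (K : ℝ → ℝ) (δ : ℝ) (x : ℝ) : ℝ :=
  ∫ y, |y| * scaledKernel K δ (x - y)

/-- The smoothed empirical objective
`F_δ(x) = (1/n) ∑ᵢ l_δ((aᵢᵀ x)² - bᵢ)`. -/
noncomputable def smoothedObj {p n : ℕ} (K : ℝ → ℝ) (δ : ℝ)
    (a : Fin n → EuclideanSpace ℝ (Fin p)) (b : Fin n → ℝ)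
    (x : EuclideanSpace ℝ (Fin p)) : ℝ :=
  (n : ℝ)⁻¹ * ∑ i, smoothedLoss K δ ((⟪a i, x⟫) ^ 2 - b i)

/-- `Δ(x) = min(‖x - x⋆‖, ‖x + x⋆‖)`, the distance to the pair of true signals. -/
noncomputable def distSig {p : ℕ} (xs x : EuclideanSpace ℝ (Fin p)) : ℝ :=
  min ‖x - xs‖ ‖x + xs‖

/-- The standard Gaussian measure `N(0, I_p)` on `EuclideanSpace ℝ (Fin p)`. -/
noncomputable def stdGaussian (p : ℕ) : Measure (EuclideanSpace ℝ (Fin p)) :=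
  Measure.map (MeasurableEquiv.toLp 2 (Fin p → ℝ))
    (Measure.pi fun _ => gaussianReal 0 1)

/-- `a` is a family of i.i.d. standard Gaussian random vectors in `ℝ^p`. -/
def IsIIDStdGaussian {Ω : Type*} [MeasurableSpace Ω] (P : Measure Ω) {p : ℕ} {ι : Type*}
    (a : ι → Ω → EuclideanSpace ℝ (Fin p)) : Prop :=
  (∀ i, Measurable (a i)) ∧
  iIndepFun a P ∧
  (∀ i, Measure.map (a i) P = stdGaussian p)


/-- The population objective `G(x) = E[l_δ((aᵀx)² - (aᵀx⋆)²)]`, `a ~ N(0, I_p)`. -/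
noncomputable def popObj {p : ℕ} (K : ℝ → ℝ) (δ : ℝ)
    (xs x : EuclideanSpace ℝ (Fin p)) : ℝ :=
  ∫ v, smoothedLoss K δ ((⟪v, x⟫) ^ 2 - (⟪v, xs⟫) ^ 2) ∂(stdGaussian p)

/-!
The smoothed loss `L = l_δ` is the convolution of `|·|` with the even probability density `K_δ`,
so it is even, convex and 1-Lipschitz; hence `L ≥ L 0`, and `c = L 1 - L 0 > 0` because
`K 0 > 0`. The integrand of `G (± x⋆)` is constantly `L 0`, so `± x⋆` are global minimizers.

Write `x = α x⋆ + y` with `y ⊥ x⋆`. The jointly Gaussian, uncorrelated pair `(⟪x⋆, a⟫, ⟪y, a⟫)`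
is independent, so `G x = E L((α z₁ + β z₂)² - z₁²)` for a standard Gaussian `z` in `ℝ²`, where
`β = ‖y‖` and `α² + β² = ‖x‖²`. The increment `t = (α z₁ + β z₂)² ≤ r ‖z‖²`, `r = ‖x‖²`, lowers
`L (z₁²)` by at least `c t` when `t ≤ 1 ≤ z₁²` (convexity), does not raise it when `t ≤ z₁²`, and
raises it by at most `t` in general. The gain is at least `c P(z₁² ≥ 1) r`, while the set where
only the last bound applies contributes `o(r)` by dominated convergence; so `G x ≤ G 0` near `0`.
-/

section SmoothedLoss

variable {K : ℝ → ℝ} {δ : ℝ}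

lemma IsGoodKernel.integrable (hK : IsGoodKernel K) : Integrable K := by
  by_contra h
  simpa [integral_undef h] using hK.integral_one

lemma IsGoodKernel.continuous (hK : IsGoodKernel K) : Continuous K :=
  hK.lipschitz.choose_spec.continuous

lemma IsGoodKernel.integrable_abs_sub_mul (hK : IsGoodKernel K) (s δ : ℝ) :
    Integrable fun u => |s - δ * u| * K u := by
  have hbar : Integrable fun u => |δ| * |u * K u| := hK.bar_integrable.abs.const_mul _
  have hcont : Continuous fun u => |s - δ * u| * K u := by
    have := hK.continuous
    fun_prop
  refine ((hK.integrable.const_mul |s|).add hbar).mono' hcont.aestronglyMeasurable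
    (.of_forall fun u => ?_)
  have hKu := hK.nonneg u
  have htri : |s - δ * u| ≤ |s| + |δ| * |u| := by
    simpa [abs_mul] using abs_sub s (δ * u)
  simp only [Pi.add_apply, Real.norm_eq_abs, abs_mul, abs_abs, abs_of_nonneg hKu]
  nlinarith

lemma smoothedLoss_eq_integral (hδ : 0 < δ) (s : ℝ) :
    smoothedLoss K δ s = ∫ u, |s - δ * u| * K u := by
  set f : ℝ → ℝ := fun y => |s - y| * (δ⁻¹ * K (y / δ))
  calc smoothedLoss K δ s = ∫ y, f y := by
        rw [← integral_sub_left_eq_self f volume s]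
        simp [smoothedLoss, scaledKernel, f]
    _ = δ * ∫ u, f (δ * u) := by
        rw [Measure.integral_comp_mul_left, abs_inv, abs_of_pos hδ, smul_eq_mul, ← mul_assoc,
          mul_inv_cancel₀ hδ.ne', one_mul]
    _ = ∫ u, |s - δ * u| * K u := by
        rw [← integral_const_mul]
        congr 1 with u
        simp only [f, mul_div_cancel_left₀ _ hδ.ne']
        field_simp

lemma smoothedLoss_nonneg (hK : IsGoodKernel K) (hδ : 0 < δ) (s : ℝ) :
    0 ≤ smoothedLoss K δ s := by
  rw [smoothedLoss_eq_integral hδ]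
  exact integral_nonneg fun u => mul_nonneg (abs_nonneg _) (hK.nonneg u)

lemma smoothedLoss_neg (hK : IsGoodKernel K) (hδ : 0 < δ) (s : ℝ) :
    smoothedLoss K δ (-s) = smoothedLoss K δ s := by
  rw [smoothedLoss_eq_integral hδ, smoothedLoss_eq_integral hδ, ← integral_neg_eq_self]
  congr 1 with u
  rw [← hK.symm u, ← abs_neg]
  ring_nf

lemma smoothedLoss_le_add_abs_sub (hK : IsGoodKernel K) (hδ : 0 < δ) (a b : ℝ) :
    smoothedLoss K δ a ≤ smoothedLoss K δ b + |a - b| := by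
  simp only [smoothedLoss_eq_integral hδ]
  calc ∫ u, |a - δ * u| * K u ≤ ∫ u, (|b - δ * u| * K u + |a - b| * K u) := by
        refine integral_mono (hK.integrable_abs_sub_mul _ _)
          ((hK.integrable_abs_sub_mul _ _).add (hK.integrable.const_mul _)) fun u => ?_
        rw [← add_mul]
        refine mul_le_mul_of_nonneg_right ?_ (hK.nonneg u)
        linarith [abs_sub_le a b (δ * u)]
    _ = (∫ u, |b - δ * u| * K u) + |a - b| := by
        rw [integral_add (hK.integrable_abs_sub_mul _ _) (hK.integrable.const_mul _),
          integral_const_mul, hK.integral_one, mul_one]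

lemma lipschitzWith_smoothedLoss (hK : IsGoodKernel K) (hδ : 0 < δ) :
    LipschitzWith 1 (smoothedLoss K δ) :=
  .of_le_add fun a b => by simpa [Real.dist_eq] using smoothedLoss_le_add_abs_sub hK hδ a b

lemma convexOn_smoothedLoss (hK : IsGoodKernel K) (hδ : 0 < δ) :
    ConvexOn ℝ Set.univ (smoothedLoss K δ) := by
  refine ⟨convex_univ, fun x _ y _ a b ha hb hab => ?_⟩
  simp only [smul_eq_mul, smoothedLoss_eq_integral hδ]
  calc ∫ u, |a * x + b * y - δ * u| * K u
      ≤ ∫ u, (a * (|x - δ * u| * K u) + b * (|y - δ * u| * K u)) := by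
        refine integral_mono (hK.integrable_abs_sub_mul _ _)
          (((hK.integrable_abs_sub_mul _ _).const_mul _).add
            ((hK.integrable_abs_sub_mul _ _).const_mul _)) fun u => ?_
        have hsplit : a * x + b * y - δ * u = a * (x - δ * u) + b * (y - δ * u) := by
          linear_combination (δ * u) * hab
        have := abs_add_le (a * (x - δ * u)) (b * (y - δ * u))
        rw [abs_mul, abs_mul, abs_of_nonneg ha, abs_of_nonneg hb, ← hsplit] at this
        nlinarith [hK.nonneg u]
    _ = a * (∫ u, |x - δ * u| * K u) + b * ∫ u, |y - δ * u| * K u := by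
        rw [integral_add ((hK.integrable_abs_sub_mul _ _).const_mul _)
          ((hK.integrable_abs_sub_mul _ _).const_mul _), integral_const_mul, integral_const_mul]

lemma smoothedLoss_le_of_abs_le (hK : IsGoodKernel K) (hδ : 0 < δ) {a b : ℝ}
    (hab : |a| ≤ |b|) : smoothedLoss K δ a ≤ smoothedLoss K δ b := by
  have h := (convexOn_smoothedLoss hK hδ).le_max_of_mem_Icc (Set.mem_univ (-|b|))
    (Set.mem_univ |b|) (abs_le.mp hab)
  rcases abs_choice b with hb | hb <;>
    simpa [smoothedLoss_neg hK hδ, hb] using h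

lemma smoothedLoss_zero_lt_one (hK : IsGoodKernel K) (hδ : 0 < δ) :
    smoothedLoss K δ 0 < smoothedLoss K δ 1 := by
  have h₁ := hK.integrable_abs_sub_mul 1 δ
  have h₂ := hK.integrable_abs_sub_mul (-1) δ
  have h₀ := (hK.integrable_abs_sub_mul 0 δ).const_mul 2
  set g : ℝ → ℝ := fun u =>
    |1 - δ * u| * K u + |-1 - δ * u| * K u - 2 * (|0 - δ * u| * K u)
  have hg : ∫ u, g u = 2 * (smoothedLoss K δ 1 - smoothedLoss K δ 0) := by
    rw [integral_sub (h₁.fun_add h₂) h₀, integral_add h₁ h₂, integral_const_mul,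
      ← smoothedLoss_eq_integral hδ, ← smoothedLoss_eq_integral hδ,
      ← smoothedLoss_eq_integral hδ, smoothedLoss_neg hK hδ]
    ring
  -- `g u = 2 (1 - |δ u|)⁺ K u` is continuous, nonnegative and positive at `0`
  have hpos : 0 < ∫ u, g u := by
    refine integral_pos_of_integrable_nonneg_nonzero (x := 0) ?_ ((h₁.fun_add h₂).sub h₀)
      (fun u => ?_) ?_
    · have := hK.continuous
      fun_prop
    · have := abs_add_le (1 - δ * u) (-1 - δ * u)
      rw [show 1 - δ * u + (-1 - δ * u) = 2 * (0 - δ * u) by ring, abs_mul, abs_two] at this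
      have := mul_le_mul_of_nonneg_right this (hK.nonneg u)
      simp only [g, Pi.zero_apply]
      linarith
    · norm_num [g]
      exact hK.pos_at_zero.ne'
  linarith

lemma smoothedLoss_sub_le (hK : IsGoodKernel K) (hδ : 0 < δ) {τ s : ℝ} (hτ₀ : 0 ≤ τ)
    (hτ₁ : τ ≤ 1) (hs : 1 ≤ s) :
    smoothedLoss K δ (s - τ) ≤
      smoothedLoss K δ s - τ * (smoothedLoss K δ 1 - smoothedLoss K δ 0) := by
  have hconv : ∀ x y a b : ℝ, 0 ≤ a → 0 ≤ b → a + b = 1 →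
      smoothedLoss K δ (a * x + b * y) ≤ a * smoothedLoss K δ x + b * smoothedLoss K δ y :=
    fun x y a b ha hb hab => by
      simpa using (convexOn_smoothedLoss hK hδ).2 (Set.mem_univ x) (Set.mem_univ y) ha hb hab
  have hs₀ : 0 < s := by linarith
  have hinv : s⁻¹ ≤ 1 := inv_le_one_of_one_le₀ hs
  -- `s - τ ∈ [s - 1, s]` and `1, s - 1 ∈ [0, s]`; the last two give `L 1 + L (s - 1) ≤ L 0 + L s`
  have h₁ := hconv s (s - 1) _ _ (sub_nonneg.2 hτ₁) hτ₀ (by ring)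
  have h₂ := hconv s 0 _ _ (inv_nonneg.2 hs₀.le) (sub_nonneg.2 hinv) (by ring)
  have h₃ := hconv s 0 _ _ (sub_nonneg.2 hinv) (inv_nonneg.2 hs₀.le) (by ring)
  rw [show (1 - τ) * s + τ * (s - 1) = s - τ by ring] at h₁
  rw [mul_zero, add_zero, inv_mul_cancel₀ hs₀.ne'] at h₂
  rw [mul_zero, add_zero, sub_mul, one_mul, inv_mul_cancel₀ hs₀.ne'] at h₃
  nlinarith

lemma smoothedLoss_sub_le_piecewise (hK : IsGoodKernel K) (hδ : 0 < δ) {a t R : ℝ}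
    (ha : 0 ≤ a) (ht : 0 ≤ t) (htR : t ≤ R) :
    smoothedLoss K δ (t - a) ≤ smoothedLoss K δ a
      - (smoothedLoss K δ 1 - smoothedLoss K δ 0) * (if 1 ≤ a then t else 0)
      + (1 + (smoothedLoss K δ 1 - smoothedLoss K δ 0)) * (if a < R ∨ 1 < R then R else 0) := by
  have hc := sub_pos.2 (smoothedLoss_zero_lt_one hK hδ)
  by_cases hbad : a < R ∨ 1 < R
  · have hlip := smoothedLoss_le_add_abs_sub hK hδ (t - a) (-a)
    rw [smoothedLoss_neg hK hδ, sub_neg_eq_add, sub_add_cancel, abs_of_nonneg ht] at hlip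
    rw [if_pos hbad]
    split_ifs <;> nlinarith
  · rw [not_or, not_lt, not_lt] at hbad
    rw [if_neg (not_or.2 ⟨hbad.1.not_gt, hbad.2.not_gt⟩), mul_zero, add_zero,
      ← smoothedLoss_neg hK hδ, neg_sub]
    split_ifs with h1
    · exact (smoothedLoss_sub_le hK hδ ht (htR.trans hbad.2) h1).trans_eq (by ring)
    · rw [mul_zero, sub_zero]
      exact smoothedLoss_le_of_abs_le hK hδ (by
        rw [abs_of_nonneg (by linarith), abs_of_nonneg ha]; linarith)

lemma integrable_smoothedLoss_comp (hK : IsGoodKernel K) (hδ : 0 < δ) {Ω : Type*}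
    [MeasurableSpace Ω] {μ : Measure Ω} [IsFiniteMeasure μ] {f : Ω → ℝ}
    (hf : Integrable f μ) : Integrable (fun ω => smoothedLoss K δ (f ω)) μ := by
  refine ((integrable_const (smoothedLoss K δ 0)).add hf.abs).mono'
    ((lipschitzWith_smoothedLoss hK hδ).continuous.comp_aestronglyMeasurable hf.1)
    (.of_forall fun ω => ?_)
  rw [Real.norm_eq_abs, abs_of_nonneg (smoothedLoss_nonneg hK hδ _)]
  simpa using smoothedLoss_le_add_abs_sub hK hδ (f ω) 0

end SmoothedLoss

open Filter Topology
open scoped NNReal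

local notation "γ₂" => Measure.prod (gaussianReal 0 1) (gaussianReal 0 1)

section StdGaussian

variable {E : Type*} [NormedAddCommGroup E] [InnerProductSpace ℝ E] [FiniteDimensional ℝ E]
  [MeasurableSpace E] [BorelSpace E]

lemma map_inner_stdGaussian (u : E) :
    (ProbabilityTheory.stdGaussian E).map (fun v => ⟪u, v⟫) =
      gaussianReal 0 (‖u‖₊ ^ 2) := by
  have h : HasGaussianLaw (fun v : E => ⟪u, v⟫) (ProbabilityTheory.stdGaussian E) :=
    IsGaussian.hasGaussianLaw_id.map_fun (innerSL ℝ u)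
  have hmean := integral_strongDual_stdGaussian (E := E) (innerSL ℝ u)
  have hvar := variance_dual_stdGaussian (E := E) (innerSL ℝ u)
  simp only [innerSL_apply_apply, innerSL_apply_norm] at hmean hvar
  rw [h.map_eq_gaussianReal, hmean]
  congr
  ext
  simpa using hvar

lemma map_inner_prod_stdGaussian {u w : E} (huw : ⟪u, w⟫ = 0) :
    (ProbabilityTheory.stdGaussian E).map (fun v => (⟪u, v⟫, ⟪w, v⟫)) =
      (gaussianReal 0 (‖u‖₊ ^ 2)).prod (gaussianReal 0 (‖w‖₊ ^ 2)) := by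
  have h : HasGaussianLaw (fun v : E => (⟪u, v⟫, ⟪w, v⟫)) (ProbabilityTheory.stdGaussian E) :=
    IsGaussian.hasGaussianLaw_id.map_fun ((innerSL ℝ u).prod (innerSL ℝ w))
  have hcov :
      cov[fun v : E => ⟪u, v⟫, fun v => ⟪w, v⟫; ProbabilityTheory.stdGaussian E] = 0 := by
    rw [← covarianceBilin_apply_eq_cov IsGaussian.memLp_two_id, covarianceBilin_stdGaussian,
      innerSL_apply_apply, huw]
  rw [(h.indepFun_of_covariance_eq_zero hcov).map_prod_eq_prod_map_map (by fun_prop)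
    (by fun_prop), map_inner_stdGaussian, map_inner_stdGaussian]

lemma gaussianReal_sq_eq_map_mul (c : ℝ≥0) :
    gaussianReal 0 (c ^ 2) = (gaussianReal 0 1).map (fun x => (c : ℝ) * x) := by
  rw [gaussianReal_map_const_mul, mul_zero]
  congr
  ext
  simp

lemma integral_comp_inner_prod_stdGaussian {u w : E} (huw : ⟪u, w⟫ = 0) {f : ℝ × ℝ → ℝ}
    (hf : Continuous f) :
    ∫ v, f (⟪u, v⟫, ⟪w, v⟫) ∂(ProbabilityTheory.stdGaussian E) =
      ∫ z, f (‖u‖ * z.1, ‖w‖ * z.2) ∂γ₂ := by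
  rw [← integral_map (by fun_prop) hf.aestronglyMeasurable, map_inner_prod_stdGaussian huw,
    gaussianReal_sq_eq_map_mul, gaussianReal_sq_eq_map_mul,
    Measure.map_prod_map _ _ (by fun_prop) (by fun_prop),
    integral_map (by fun_prop) hf.aestronglyMeasurable]
  rfl

end StdGaussian

lemma stdGaussian_eq (p : ℕ) :
    stdGaussian p = ProbabilityTheory.stdGaussian (EuclideanSpace ℝ (Fin p)) :=
  map_pi_eq_stdGaussian

instance (p : ℕ) : IsProbabilityMeasure (stdGaussian p) := by
  rw [stdGaussian_eq]
  infer_instance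

section GaussianPlane

lemma integral_sq_gaussianReal : ∫ x, x ^ 2 ∂(gaussianReal 0 1) = 1 := by
  have h := variance_id_gaussianReal (μ := 0) (v := 1)
  rwa [variance_of_integral_eq_zero aemeasurable_id integral_id_gaussianReal] at h

lemma integral_add_mul_sq_gaussianReal (a b : ℝ) :
    ∫ y, (a + b * y) ^ 2 ∂(gaussianReal 0 1) = a ^ 2 + b ^ 2 := by
  have hid : Integrable (fun y : ℝ => y) (gaussianReal 0 1) := IsGaussian.integrable_id
  have h₁ := (integrable_const (a ^ 2)).fun_add (hid.const_mul (2 * a * b))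
  have h₂ : Integrable (fun y : ℝ => b ^ 2 * y ^ 2) (gaussianReal 0 1) :=
    (memLp_id_gaussianReal 2).integrable_sq.const_mul _
  calc ∫ y, (a + b * y) ^ 2 ∂(gaussianReal 0 1)
      = ∫ y, (a ^ 2 + 2 * a * b * y + b ^ 2 * y ^ 2) ∂(gaussianReal 0 1) := by
        congr 1 with y; ring
    _ = a ^ 2 + b ^ 2 := by
        rw [integral_add h₁ h₂, integral_add (integrable_const _) (hid.const_mul _),
          integral_const_mul, integral_const_mul, integral_id_gaussianReal,
          integral_sq_gaussianReal]
        simp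

lemma integrable_sq_linear_gaussianProd (a b : ℝ) :
    Integrable (fun z : ℝ × ℝ => (a * z.1 + b * z.2) ^ 2) γ₂ := by
  have h := memLp_id_gaussianReal (μ := 0) (v := 1) 2
  exact (((h.comp_fst _).const_mul a).add ((h.comp_snd _).const_mul b)).integrable_sq

lemma integrable_normSq_gaussianProd : Integrable (fun z : ℝ × ℝ => z.1 ^ 2 + z.2 ^ 2) γ₂ := by
  simpa using
    (integrable_sq_linear_gaussianProd 1 0).fun_add (integrable_sq_linear_gaussianProd 0 1)

lemma gaussianReal_real_one_le_sq_pos : 0 < (gaussianReal 0 1).real {x : ℝ | 1 ≤ x ^ 2} := by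
  refine ENNReal.toReal_pos (fun h => ?_) (measure_ne_top _ _)
  have hsub : Set.Ioi (1 : ℝ) ⊆ {x | 1 ≤ x ^ 2} := fun x (hx : 1 < x) => by
    change 1 ≤ x ^ 2
    nlinarith
  have hvol := gaussianReal_absolutelyContinuous' 0 one_ne_zero (measure_mono_null hsub h)
  simp at hvol

lemma gaussianReal_real_mul_le_integral_indicator (α β : ℝ) :
    (gaussianReal 0 1).real {x : ℝ | 1 ≤ x ^ 2} * (α ^ 2 + β ^ 2) ≤
      ∫ z, {z : ℝ × ℝ | 1 ≤ z.1 ^ 2}.indicator (fun z => (α * z.1 + β * z.2) ^ 2) z ∂γ₂ := by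
  set S : Set (ℝ × ℝ) := {z | 1 ≤ z.1 ^ 2}
  have hS : MeasurableSet {x : ℝ | 1 ≤ x ^ 2} := measurableSet_le (by fun_prop) (by fun_prop)
  have hint : Integrable (S.indicator fun z => (α * z.1 + β * z.2) ^ 2) γ₂ :=
    (integrable_sq_linear_gaussianProd α β).indicator
      (measurableSet_le (by fun_prop) (by fun_prop))
  rw [integral_prod _ hint, ← smul_eq_mul, ← integral_indicator_const _ hS]
  refine integral_mono ((integrable_const _).indicator hS) hint.integral_prod_left fun x => ?_
  by_cases hx : 1 ≤ x ^ 2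
  · have hslice : ∀ y, S.indicator (fun z => (α * z.1 + β * z.2) ^ 2) (x, y) =
        (α * x + β * y) ^ 2 := fun y => Set.indicator_of_mem (show (x, y) ∈ S from hx) _
    rw [Set.indicator_of_mem (show x ∈ {x : ℝ | 1 ≤ x ^ 2} from hx)]
    simp only [hslice, integral_add_mul_sq_gaussianReal]
    nlinarith [sq_nonneg α]
  · have hslice : ∀ y, S.indicator (fun z => (α * z.1 + β * z.2) ^ 2) (x, y) = 0 :=
      fun y => Set.indicator_of_notMem (show (x, y) ∉ S from hx) _
    rw [Set.indicator_of_notMem (show x ∉ {x : ℝ | 1 ≤ x ^ 2} from hx)]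
    simp only [hslice, integral_zero, le_refl]

/-- Outside `badSet r`, a value `t ≤ r * (z.1 ^ 2 + z.2 ^ 2)` satisfies `t ≤ min (z.1 ^ 2) 1`. -/
def badSet (r : ℝ) : Set (ℝ × ℝ) :=
  {z | z.1 ^ 2 < r * (z.1 ^ 2 + z.2 ^ 2) ∨ 1 < r * (z.1 ^ 2 + z.2 ^ 2)}

lemma measurableSet_badSet (r : ℝ) : MeasurableSet (badSet r) := by
  rw [badSet, Set.ofPred_or]
  exact (measurableSet_lt (by fun_prop) (by fun_prop)).union
    (measurableSet_lt (by fun_prop) (by fun_prop))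

lemma tendsto_integral_indicator_badSet :
    Tendsto (fun r => ∫ z, (badSet r).indicator (fun z => z.1 ^ 2 + z.2 ^ 2) z ∂γ₂)
      (𝓝 0) (𝓝 0) := by
  have hq := integrable_normSq_gaussianProd
  have hlim := tendsto_integral_filter_of_dominated_convergence (l := 𝓝 (0 : ℝ)) (μ := γ₂)
    (F := fun r z => (badSet r).indicator (fun z => z.1 ^ 2 + z.2 ^ 2) z) (f := fun _ => 0) _
    (.of_forall fun r => (hq.indicator (measurableSet_badSet r)).aestronglyMeasurable)
    (.of_forall fun r => .of_forall fun z => ?_) hq ?_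
  · simpa using hlim
  · rw [Real.norm_eq_abs, abs_of_nonneg (Set.indicator_nonneg (fun _ _ => by positivity) _)]
    exact Set.indicator_le_self' (fun _ _ => by positivity) z
  -- off the null set `{z.1 = 0}`, `z ∉ badSet r` once `r * ‖z‖²` is below `z.1 ^ 2` and `1`
  have := nullSingletonClass_gaussianReal (μ := 0) one_ne_zero
  filter_upwards [Measure.quasiMeasurePreserving_fst.ae ((gaussianReal 0 1).ae_ne 0)] with z hz
  have hr : Tendsto (fun r => r * (z.1 ^ 2 + z.2 ^ 2)) (𝓝 0) (𝓝 0) := by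
    simpa using (tendsto_id (x := 𝓝 (0 : ℝ))).mul_const (z.1 ^ 2 + z.2 ^ 2)
  refine tendsto_const_nhds.congr' ?_
  filter_upwards [hr.eventually (gt_mem_nhds (sq_pos_of_ne_zero hz)),
    hr.eventually (gt_mem_nhds one_pos)] with r h₁ h₂
  exact (Set.indicator_of_notMem (by simp [badSet, not_or, h₁.le, h₂.le]) _).symm

end GaussianPlane

section ReducedObjective

variable {K : ℝ → ℝ} {δ : ℝ}

noncomputable def reducedObj (K : ℝ → ℝ) (δ α β : ℝ) : ℝ :=
  ∫ z, smoothedLoss K δ ((α * z.1 + β * z.2) ^ 2 - z.1 ^ 2) ∂γ₂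

lemma integrable_reducedObj_integrand (hK : IsGoodKernel K) (hδ : 0 < δ) (α β : ℝ) :
    Integrable (fun z : ℝ × ℝ => smoothedLoss K δ ((α * z.1 + β * z.2) ^ 2 - z.1 ^ 2)) γ₂ :=
  integrable_smoothedLoss_comp hK hδ <| by
    simpa using (integrable_sq_linear_gaussianProd α β).sub' (integrable_sq_linear_gaussianProd 1 0)

lemma smoothedLoss_zero_le_reducedObj (hK : IsGoodKernel K) (hδ : 0 < δ) (α β : ℝ) :
    smoothedLoss K δ 0 ≤ reducedObj K δ α β := by
  simpa [reducedObj] using integral_mono (integrable_const _)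
    (integrable_reducedObj_integrand hK hδ α β) fun z => smoothedLoss_le_of_abs_le hK hδ (by simp)

lemma reducedObj_le (hK : IsGoodKernel K) (hδ : 0 < δ) (α β : ℝ) :
    reducedObj K δ α β ≤ reducedObj K δ 0 0 - (α ^ 2 + β ^ 2) *
      ((smoothedLoss K δ 1 - smoothedLoss K δ 0) * (gaussianReal 0 1).real {x : ℝ | 1 ≤ x ^ 2}
        - (1 + (smoothedLoss K δ 1 - smoothedLoss K δ 0)) *
          ∫ z, (badSet (α ^ 2 + β ^ 2)).indicator (fun z => z.1 ^ 2 + z.2 ^ 2) z ∂γ₂) := by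
  set c := smoothedLoss K δ 1 - smoothedLoss K δ 0
  set r := α ^ 2 + β ^ 2
  set gain : ℝ × ℝ → ℝ := {z : ℝ × ℝ | 1 ≤ z.1 ^ 2}.indicator fun z => (α * z.1 + β * z.2) ^ 2
  set loss : ℝ × ℝ → ℝ := (badSet r).indicator fun z => z.1 ^ 2 + z.2 ^ 2
  have hc : 0 < c := sub_pos.2 (smoothedLoss_zero_lt_one hK hδ)
  have hpt : ∀ z : ℝ × ℝ, smoothedLoss K δ ((α * z.1 + β * z.2) ^ 2 - z.1 ^ 2) ≤
      smoothedLoss K δ (z.1 ^ 2) - c * gain z + (1 + c) * r * loss z := by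
    intro z
    have hCS : (α * z.1 + β * z.2) ^ 2 ≤ r * (z.1 ^ 2 + z.2 ^ 2) := by
      nlinarith [sq_nonneg (α * z.2 - β * z.1)]
    have := smoothedLoss_sub_le_piecewise hK hδ (sq_nonneg z.1) (sq_nonneg _) hCS
    simp only [gain, loss, Set.indicator_apply, badSet, Set.mem_ofPred_eq]
    split_ifs at this ⊢ <;> linarith
  have hgain : Integrable gain γ₂ := (integrable_sq_linear_gaussianProd α β).indicator
    (measurableSet_le (by fun_prop) (by fun_prop))
  have hloss : Integrable loss γ₂ :=
    integrable_normSq_gaussianProd.indicator (measurableSet_badSet r)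
  have hL : Integrable (fun z : ℝ × ℝ => smoothedLoss K δ (z.1 ^ 2)) γ₂ :=
    integrable_smoothedLoss_comp hK hδ (by simpa using integrable_sq_linear_gaussianProd 1 0)
  have hzero : reducedObj K δ 0 0 = ∫ z, smoothedLoss K δ (z.1 ^ 2) ∂γ₂ := by
    simp [reducedObj, smoothedLoss_neg hK hδ]
  have hmain := hL.sub' (hgain.const_mul c)
  have hint := integral_mono (integrable_reducedObj_integrand hK hδ α β)
    (hmain.fun_add (hloss.const_mul ((1 + c) * r))) hpt
  rw [integral_add hmain (hloss.const_mul _), integral_sub hL (hgain.const_mul c),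
    integral_const_mul, integral_const_mul, ← hzero] at hint
  have := mul_le_mul_of_nonneg_left (gaussianReal_real_mul_le_integral_indicator α β) hc.le
  rw [reducedObj]
  nlinarith

lemma isLocalMax_reducedObj (hK : IsGoodKernel K) (hδ : 0 < δ) :
    IsLocalMax (fun q : ℝ × ℝ => reducedObj K δ q.1 q.2) 0 := by
  have hc := sub_pos.2 (smoothedLoss_zero_lt_one hK hδ)
  have hr : Tendsto (fun q : ℝ × ℝ => q.1 ^ 2 + q.2 ^ 2) (𝓝 0) (𝓝 0) :=
    ((continuous_fst.pow 2).add (continuous_snd.pow 2)).tendsto' 0 0 (by simp)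
  have hsmall := ((tendsto_integral_indicator_badSet.comp hr).const_mul
    (1 + (smoothedLoss K δ 1 - smoothedLoss K δ 0))).eventually_lt_const
    (by rw [mul_zero]; exact mul_pos hc gaussianReal_real_one_le_sq_pos)
  filter_upwards [hsmall] with q hq
  rw [Function.comp_apply] at hq
  simp only [Prod.fst_zero, Prod.snd_zero]
  linarith [reducedObj_le hK hδ q.1 q.2,
    mul_nonneg (by positivity : 0 ≤ q.1 ^ 2 + q.2 ^ 2) (sub_nonneg.2 hq.le)]

end ReducedObjective

section PopulationObjective

variable {p : ℕ} {K : ℝ → ℝ} {δ : ℝ} {xs : EuclideanSpace ℝ (Fin p)}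

lemma popObj_eq_smoothedLoss_zero {x : EuclideanSpace ℝ (Fin p)}
    (hx : ∀ v, ⟪v, x⟫ ^ 2 = ⟪v, xs⟫ ^ 2) : popObj K δ xs x = smoothedLoss K δ 0 := by
  simp [popObj, hx]

lemma popObj_eq_reducedObj (hK : IsGoodKernel K) (hδ : 0 < δ) (hxs : ‖xs‖ = 1)
    (x : EuclideanSpace ℝ (Fin p)) :
    popObj K δ xs x = reducedObj K δ ⟪xs, x⟫ ‖x - ⟪xs, x⟫ • xs‖ := by
  set α := ⟪xs, x⟫
  set y := x - α • xs
  have hy : ⟪xs, y⟫ = 0 := by simp [y, α, inner_sub_right, real_inner_smul_right, hxs]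
  have hx : ∀ v, ⟪v, x⟫ = α * ⟪xs, v⟫ + ⟪y, v⟫ := fun v => by
    simp only [y, real_inner_comm v, inner_sub_right, real_inner_smul_right]
    ring
  have hf : Continuous fun z : ℝ × ℝ => smoothedLoss K δ ((α * z.1 + z.2) ^ 2 - z.1 ^ 2) :=
    (lipschitzWith_smoothedLoss hK hδ).continuous.comp (by fun_prop)
  have := integral_comp_inner_prod_stdGaussian hy hf
  simp only [hxs, one_mul] at this
  rw [popObj, stdGaussian_eq, reducedObj, ← this]
  simp_rw [hx, real_inner_comm _ xs]

lemma isLocalMax_popObj_zero (hK : IsGoodKernel K) (hδ : 0 < δ) (hxs : ‖xs‖ = 1) :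
    IsLocalMax (popObj K δ xs) 0 := by
  set φ := fun x : EuclideanSpace ℝ (Fin p) => (⟪xs, x⟫, ‖x - ⟪xs, x⟫ • xs‖)
  have hφ0 : φ 0 = 0 := by simp [φ]
  have h := (hφ0 ▸ isLocalMax_reducedObj hK hδ).comp_continuous
    (show Continuous φ by fun_prop).continuousAt
  convert h using 1
  exact funext (popObj_eq_reducedObj hK hδ hxs)

end PopulationObjective

theorem population_global_minima_and_local_max_at_zero_general
    {p : ℕ} (xs : EuclideanSpace ℝ (Fin p)) (hxs : ‖xs‖ = 1)
    (K : ℝ → ℝ) (hK : IsGoodKernel K) (δ : ℝ) (hδ : 0 < δ) :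
    (∀ x : EuclideanSpace ℝ (Fin p), popObj K δ xs xs ≤ popObj K δ xs x) ∧
    (∀ x : EuclideanSpace ℝ (Fin p), popObj K δ xs (-xs) ≤ popObj K δ xs x) ∧
    IsLocalMin (popObj K δ xs) xs ∧ IsLocalMin (popObj K δ xs) (-xs) ∧
    IsLocalMax (popObj K δ xs) 0 := by
  have hmin : ∀ x, smoothedLoss K δ 0 ≤ popObj K δ xs x := fun x => by
    rw [popObj_eq_reducedObj hK hδ hxs]
    exact smoothedLoss_zero_le_reducedObj hK hδ _ _
  have hself : popObj K δ xs xs = smoothedLoss K δ 0 := popObj_eq_smoothedLoss_zero fun _ => rfl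
  have hneg : popObj K δ xs (-xs) = smoothedLoss K δ 0 :=
    popObj_eq_smoothedLoss_zero fun _ => by rw [inner_neg_right, neg_sq]
  refine ⟨hself ▸ hmin, hneg ▸ hmin, .of_forall (hself ▸ hmin), .of_forall (hneg ▸ hmin),
    isLocalMax_popObj_zero hK hδ hxs⟩

/-- For the population objective `G`: (a) `x⋆` and `-x⋆` are global
minimizers (hence local minima); (b) `0` is a local maximum. -/
theorem population_global_minima_and_local_max_at_zero
    {p : ℕ} (hp : 3 ≤ p) (xs : EuclideanSpace ℝ (Fin p)) (hxs : ‖xs‖ = 1)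
    (K : ℝ → ℝ) (hK : IsGoodKernel K) (δ : ℝ) (hδ : 0 < δ) :
    (∀ x : EuclideanSpace ℝ (Fin p), popObj K δ xs xs ≤ popObj K δ xs x) ∧
    (∀ x : EuclideanSpace ℝ (Fin p), popObj K δ xs (-xs) ≤ popObj K δ xs x) ∧
    IsLocalMin (popObj K δ xs) xs ∧ IsLocalMin (popObj K δ xs) (-xs) ∧
    IsLocalMax (popObj K δ xs) 0 :=
  population_global_minima_and_local_max_at_zero_general xs hxs K hK δ hδ
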